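/- If Λ = Uᵀ Λ' U where U is a nonnegative square matrix and Λ, Λ' are nonnegative upper-triangular matrices with strictly positive diagonal entries, then U is a monomial matrix: each row and each column of U has exactly one nonzero entry, and that entry is positive. -/

import Mathlib

/-!
Write `Λ = Uᵀ Λ' U` entrywise as `Λ i j = ∑ k l, U k i * Λ' k l * U l j`, a sum of nonnegative
terms. Below the diagonal `Λ i j = 0`, so every term vanishes; the terms with `k = l` then show,
since `Λ' k k > 0`, that columns `i` and `j` of `U` have disjoint supports. On the diagonal
`Λ i i > 0`, so every column of `U` has a nonzero entry. Picking one per column gives an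
injective, hence bijective, map from columns to rows, which makes `U` monomial.
-/

open Matrix

namespace Matrix

variable {n R : Type*}

theorem transpose_mul_mul_apply [Fintype n] [NonUnitalNonAssocSemiring R] (U A : Matrix n n R) (i j : n) :
    (Uᵀ * A * U) i j = ∑ k, ∑ l, U k i * A k l * U l j := by
  simp only [mul_apply, transpose_apply, Finset.sum_mul]
  exact Finset.sum_comm

theorem exists_apply_ne_zero_of_transpose_mul_mul_apply_ne_zero [Fintype n] [NonUnitalNonAssocSemiring R]
    {U A : Matrix n n R} {i j : n} (h : (Uᵀ * A * U) i j ≠ 0) : ∃ k, U k i ≠ 0 := by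
  by_contra! hcol
  exact h (by simp [transpose_mul_mul_apply, hcol])

theorem apply_eq_zero_or_apply_eq_zero_of_transpose_mul_mul_apply_eq_zero [Fintype n]
    [Semiring R] [PartialOrder R] [IsOrderedRing R] [NoZeroDivisors R]
    {U A : Matrix n n R} (hU : ∀ i j, 0 ≤ U i j) (hA : ∀ i j, 0 ≤ A i j)
    (hAd : ∀ k, A k k ≠ 0) {i j : n} (h : (Uᵀ * A * U) i j = 0) (k : n) :
    U k i = 0 ∨ U k j = 0 := by
  have hterm : ∀ k l, 0 ≤ U k i * A k l * U l j := fun k l =>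
    mul_nonneg (mul_nonneg (hU k i) (hA k l)) (hU l j)
  rw [transpose_mul_mul_apply, Finset.sum_eq_zero_iff_of_nonneg
    fun k _ => Finset.sum_nonneg fun l _ => hterm k l] at h
  have hkk : U k i * A k k * U k j = 0 :=
    (Finset.sum_eq_zero_iff_of_nonneg fun l _ => hterm k l).1 (h k (Finset.mem_univ k)) k
      (Finset.mem_univ k)
  simpa [hAd k] using hkk

theorem existsUnique_apply_ne_zero_of_cols_ne_zero_of_rows_subsingleton [Finite n] [Zero R]
    {U : Matrix n n R}
    (hcol : ∀ a, ∃ t, U t a ≠ 0) (hrow : ∀ t a b, U t a ≠ 0 → U t b ≠ 0 → a = b) :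
    (∀ t, ∃! a, U t a ≠ 0) ∧ (∀ a, ∃! t, U t a ≠ 0) := by
  choose f hf using hcol
  have hf_bij : Function.Bijective f :=
    Finite.injective_iff_bijective.1 fun a b hab => hrow (f a) a b (hf a) (hab ▸ hf b)
  refine ⟨fun t => ?_, fun a => ⟨f a, hf a, fun t ht => ?_⟩⟩
  · obtain ⟨a, rfl⟩ := hf_bij.2 t
    exact ⟨a, hf a, fun b hb => hrow (f a) b a hb (hf a)⟩
  · obtain ⟨b, rfl⟩ := hf_bij.2 t
    rw [hrow (f b) a b ht (hf b)]

end Matrix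

theorem stmt4_general {T : Type*} [Fintype T] [LinearOrder T]
    (U Λ Λ' : Matrix T T ℝ)
    (hU : ∀ i j, 0 ≤ U i j)
    (hΛut : ∀ i j, j < i → Λ i j = 0)
    (hΛd : ∀ i, 0 < Λ i i)
    (hΛ'nn : ∀ i j, 0 ≤ Λ' i j)
    (hΛ'd : ∀ i, 0 < Λ' i i)
    (heq : Λ = Uᵀ * Λ' * U) :
    (∀ t, ∃! a, U t a ≠ 0) ∧ (∀ a, ∃! t, U t a ≠ 0) ∧
      (∀ t a, U t a ≠ 0 → 0 < U t a) := by
  subst heq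
  have hdisj : ∀ t a b, b < a → U t a = 0 ∨ U t b = 0 := fun t a b hba =>
    apply_eq_zero_or_apply_eq_zero_of_transpose_mul_mul_apply_eq_zero hU hΛ'nn
      (fun k => (hΛ'd k).ne') (hΛut a b hba) t
  have hrow : ∀ t a b, U t a ≠ 0 → U t b ≠ 0 → a = b := by
    intro t a b ha hb
    by_contra hab
    rcases lt_or_gt_of_ne hab with h | h
    · exact (hdisj t b a h).elim hb ha
    · exact (hdisj t a b h).elim ha hb
  have hcol : ∀ a, ∃ t, U t a ≠ 0 := fun a =>
    exists_apply_ne_zero_of_transpose_mul_mul_apply_ne_zero (hΛd a).ne'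
  obtain ⟨hrows, hcols⟩ := existsUnique_apply_ne_zero_of_cols_ne_zero_of_rows_subsingleton hcol hrow
  exact ⟨hrows, hcols, fun t a h => (hU t a).lt_of_ne' h⟩

theorem stmt4 {T : Type*} [Fintype T] [DecidableEq T] [LinearOrder T]
    (U Λ Λ' : Matrix T T ℝ)
    (hU : ∀ i j, 0 ≤ U i j)
    (hΛnn : ∀ i j, 0 ≤ Λ i j) (hΛut : ∀ i j, j < i → Λ i j = 0)
    (hΛd : ∀ i, 0 < Λ i i)
    (hΛ'nn : ∀ i j, 0 ≤ Λ' i j) (hΛ'ut : ∀ i j, j < i → Λ' i j = 0)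
    (hΛ'd : ∀ i, 0 < Λ' i i)
    (heq : Λ = Uᵀ * Λ' * U) :
    (∀ t, ∃! a, U t a ≠ 0) ∧ (∀ a, ∃! t, U t a ≠ 0) ∧
      (∀ t a, U t a ≠ 0 → 0 < U t a) :=
  stmt4_general U Λ Λ' hU hΛut hΛd hΛ'nn hΛ'd heq
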